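/- arXiv:2511.03447 — 8 statements merged into one kernel-verified Lean document; each statement's English description precedes it below -/
import Mathlib

section
/- Let μ > 0 and let ψ : (0,∞) → ℝ be a nonnegative, nondecreasing, continuous, bounded function. Then the function u(x) = (1/√μ)(sinh(√μ x) ∫_x^∞ ψ(y) e^{-√μ y} dy + e^{-√μ x} ∫_0^x ψ(y) sinh(√μ y) dy) satisfies u(x) ≥ (1/(2μ)) ψ(x)(1 - e^{-2√μ x}) for all x > 0. -/
/-!
Since `ψ` is nondecreasing, `∫_x^∞ ψ(y) e^{-√μ y} dy ≥ ψ(x) e^{-√μ x} / √μ`, while the integral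
over `(0, x)` is nonnegative. Dropping it leaves `ψ(x) sinh(√μ x) e^{-√μ x} / μ`, which is the
claimed bound because `2 sinh t e^{-t} = 1 - e^{-2t}`.
-/

open MeasureTheory Filter Topology Set

section

open Real

theorem integrableOn_mul_exp_neg_mul_Ioi {f : ℝ → ℝ} {x s C : ℝ} (hs : 0 < s)
    (hf : AEStronglyMeasurable f (volume.restrict (Ioi x))) (hC : ∀ y ∈ Ioi x, |f y| ≤ C) :
    IntegrableOn (fun y => f y * exp (-s * y)) (Ioi x) := by
  refine Integrable.mono' ((exp_neg_integrableOn_Ioi x hs).const_mul C)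
    (hf.mul (by fun_prop : Continuous fun y => exp (-s * y)).aestronglyMeasurable) ?_
  filter_upwards [ae_restrict_mem measurableSet_Ioi] with y hy
  rw [norm_mul, Real.norm_eq_abs, Real.norm_of_nonneg (exp_pos _).le]
  exact mul_le_mul_of_nonneg_right (hC y hy) (exp_pos _).le

theorem mul_exp_neg_mul_div_le_setIntegral_Ioi {ψ : ℝ → ℝ} {x s C : ℝ} (hs : 0 < s)
    (hmono : MonotoneOn ψ (Ici x)) (hC : ∀ y ∈ Ioi x, ψ y ≤ C) :
    ψ x * (exp (-s * x) / s) ≤ ∫ y in Ioi x, ψ y * exp (-s * y) := by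
  have hψ_ge : ∀ y ∈ Ioi x, ψ x ≤ ψ y := fun y hy =>
    hmono self_mem_Ici (mem_Ici.2 (le_of_lt hy)) (le_of_lt hy)
  have hint : IntegrableOn (fun y => ψ y * exp (-s * y)) (Ioi x) :=
    integrableOn_mul_exp_neg_mul_Ioi hs
      (aemeasurable_restrict_of_monotoneOn measurableSet_Ioi
        (hmono.mono Ioi_subset_Ici_self)).aestronglyMeasurable
      fun y hy => abs_le_max_abs_abs (hψ_ge y hy) (hC y hy)
  calc ψ x * (exp (-s * x) / s) = ∫ y in Ioi x, ψ x * exp (-s * y) := by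
        rw [integral_const_mul, integral_exp_mul_Ioi (neg_lt_zero.2 hs), neg_div_neg_eq]
    _ ≤ ∫ y in Ioi x, ψ y * exp (-s * y) :=
        setIntegral_mono_on ((exp_neg_integrableOn_Ioi x hs).const_mul _) hint measurableSet_Ioi
          fun y hy => mul_le_mul_of_nonneg_right (hψ_ge y hy) (exp_pos _).le

theorem Real.one_sub_exp_neg_two_mul (t : ℝ) : 1 - exp (-2 * t) = 2 * sinh t * exp (-t) := by
  have h1 : exp t * exp (-t) = 1 := by rw [← exp_add, add_neg_cancel, exp_zero]
  have h2 : exp (-t) * exp (-t) = exp (-2 * t) := by rw [← exp_add]; ring_nf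
  rw [sinh_eq]
  linear_combination h2 - h1

end

theorem stmt1_general (μ : ℝ) (hμ : 0 < μ) (ψ : ℝ → ℝ)
    (hpos : ∀ x > 0, 0 ≤ ψ x)
    (hmono : MonotoneOn ψ (Set.Ioi 0))
    (hbdd : ∃ Cb : ℝ, ∀ x > 0, ψ x ≤ Cb)
    (u : ℝ → ℝ)
    (hu : u = fun x => (1 / Real.sqrt μ) *
      (Real.sinh (Real.sqrt μ * x) *
        (∫ y in Set.Ioi x, ψ y * Real.exp (-(Real.sqrt μ) * y)) +
       Real.exp (-(Real.sqrt μ) * x) *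
        (∫ y in Set.Ioo 0 x, ψ y * Real.sinh (Real.sqrt μ * y)))) :
    ∀ x > 0, u x ≥ (1 / (2 * μ)) * ψ x * (1 - Real.exp (-2 * Real.sqrt μ * x)) := by
  intro x hx
  obtain ⟨Cb, hCb⟩ := hbdd
  subst hu
  set s := Real.sqrt μ with hs_def
  have hs : 0 < s := Real.sqrt_pos.2 hμ
  have hfar := mul_exp_neg_mul_div_le_setIntegral_Ioi hs (hmono.mono (Ici_subset_Ioi.2 hx))
    fun y hy => hCb y (hx.trans hy)
  have hnear : 0 ≤ ∫ y in Ioo 0 x, ψ y * Real.sinh (s * y) :=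
    setIntegral_nonneg measurableSet_Ioo fun y hy =>
      mul_nonneg (hpos y hy.1) (Real.sinh_nonneg_iff.2 (mul_nonneg hs.le hy.1.le))
  have hsinh : 0 ≤ Real.sinh (s * x) := Real.sinh_nonneg_iff.2 (by positivity)
  calc (1 / (2 * μ)) * ψ x * (1 - Real.exp (-2 * s * x))
      = 1 / s * (Real.sinh (s * x) * (ψ x * (Real.exp (-s * x) / s))) := by
        rw [mul_assoc _ s x, neg_mul s x, Real.one_sub_exp_neg_two_mul, ← Real.mul_self_sqrt hμ.le,
          ← hs_def]
        field_simp
    _ ≤ 1 / s * (Real.sinh (s * x) * ∫ y in Ioi x, ψ y * Real.exp (-s * y)) := by gcongr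
    _ ≤ _ := mul_le_mul_of_nonneg_left
        (le_add_of_nonneg_right (mul_nonneg (Real.exp_pos _).le hnear)) (by positivity)

theorem stmt1 (μ : ℝ) (hμ : 0 < μ) (ψ : ℝ → ℝ)
    (hpos : ∀ x > 0, 0 ≤ ψ x)
    (hmono : MonotoneOn ψ (Set.Ioi 0))
    (hcont : ContinuousOn ψ (Set.Ioi 0))
    (hbdd : ∃ Cb : ℝ, ∀ x > 0, ψ x ≤ Cb)
    (u : ℝ → ℝ)
    (hu : u = fun x => (1 / Real.sqrt μ) *
      (Real.sinh (Real.sqrt μ * x) *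
        (∫ y in Set.Ioi x, ψ y * Real.exp (-(Real.sqrt μ) * y)) +
       Real.exp (-(Real.sqrt μ) * x) *
        (∫ y in Set.Ioo 0 x, ψ y * Real.sinh (Real.sqrt μ * y)))) :
    ∀ x > 0, u x ≥ (1 / (2 * μ)) * ψ x * (1 - Real.exp (-2 * Real.sqrt μ * x)) :=
  stmt1_general μ hμ ψ hpos hmono hbdd u hu
end

section
/- Let μ > 0 and let ψ : (0,∞) → ℝ be a nonnegative, nondecreasing, continuous, bounded function. Then the function u(x) = (1/√μ)(sinh(√μ x) ∫_x^∞ ψ(y) e^{-√μ y} dy + e^{-√μ x} ∫_0^x ψ(y) sinh(√μ y) dy) has derivative u'(x) ≥ (1/√μ) e^{-√μ x} ψ(x) > 0 whenever ψ(x) > 0; in particular u is nondecreasing on (0,∞). -/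
/-!
With `s = √μ`, `u` is the Green's-function solution of `-u'' + s² u = ψ` on `(0, ∞)`, `u(0) = 0`.
Differentiating, the two terms carrying `ψ(x)` cancel (variation of parameters), leaving
`u'(x) = cosh (s x) ∫ₓ^∞ ψ(y) e^{-sy} dy - e^{-sx} ∫₀ˣ ψ(y) sinh (s y) dy`.
As `ψ` is nondecreasing, replacing `ψ(y)` by `ψ(x)` decreases the first integral and increases
the second; both then become explicit, and
`cosh (s x) e^{-sx} / s - e^{-sx} (cosh (s x) - 1) / s = e^{-sx} / s`.
Hence `u'(x) ≥ e^{-sx} ψ(x) / s ≥ 0`.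
-/

open MeasureTheory Filter Topology Set

namespace VariationOfParameters

open Real

section SetIntegral

variable {E : Type*} [NormedAddCommGroup E] [NormedSpace ℝ E] [CompleteSpace E]
  {f : ℝ → E} {a b x : ℝ}

theorem hasDerivAt_setIntegral_Ioi (hf : IntegrableOn f (Ioi a)) (hax : a < x)
    (hfx : ContinuousAt f x) :
    HasDerivAt (fun t => ∫ y in Ioi t, f y) (-f x) x := by
  have hint : IntervalIntegrable f volume a x :=
    (intervalIntegrable_iff_integrableOn_Ioc_of_le hax.le).2 (hf.mono_set Ioc_subset_Ioi_self)
  have hderiv := (intervalIntegral.integral_hasDerivAt_right hint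
    ⟨Ioi a, Ioi_mem_nhds hax, hf.aestronglyMeasurable⟩ hfx).const_sub (∫ y in Ioi a, f y)
  refine hderiv.congr_of_eventuallyEq ?_
  filter_upwards [Ioi_mem_nhds hax] with t ht
  rw [← intervalIntegral.integral_Ioi_sub_Ioi hf ht.le, sub_sub_cancel]

theorem hasDerivAt_setIntegral_Ioo (hf : IntegrableOn f (Ioo a b)) (hx : x ∈ Ioo a b)
    (hfx : ContinuousAt f x) :
    HasDerivAt (fun t => ∫ y in Ioo a t, f y) (f x) x := by
  have hint : IntervalIntegrable f volume a x :=
    (intervalIntegrable_iff_integrableOn_Ioo_of_le hx.1.le).2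
      (hf.mono_set (Ioo_subset_Ioo_right hx.2.le))
  refine (intervalIntegral.integral_hasDerivAt_right hint
    ⟨Ioo a b, Ioo_mem_nhds hx.1 hx.2, hf.aestronglyMeasurable⟩ hfx).congr_of_eventuallyEq ?_
  filter_upwards [Ioi_mem_nhds hx.1] with t ht
  rw [intervalIntegral.integral_of_le ht.le, integral_Ioc_eq_integral_Ioo]

end SetIntegral

variable {s : ℝ}

theorem integral_Ioi_exp_neg_mul (hs : 0 < s) (x : ℝ) :
    ∫ y in Ioi x, exp (-s * y) = exp (-s * x) / s := by
  rw [integral_exp_mul_Ioi (neg_neg_of_pos hs), div_neg, neg_div, neg_neg]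

theorem integral_Ioo_sinh_mul (hs : s ≠ 0) {x : ℝ} (hx : 0 ≤ x) :
    ∫ y in Ioo 0 x, sinh (s * y) = (cosh (s * x) - 1) / s := by
  have hderiv (y : ℝ) : HasDerivAt (fun y => cosh (s * y) / s) (sinh (s * y)) y := by
    simpa [hs] using ((hasDerivAt_id y).const_mul s).cosh.div_const s
  rw [← integral_Ioc_eq_integral_Ioo, ← intervalIntegral.integral_of_le hx,
    intervalIntegral.integral_eq_sub_of_hasDerivAt (fun y _ => hderiv y)
      ((by fun_prop : Continuous fun y => sinh (s * y)).intervalIntegrable _ _),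
    mul_zero, cosh_zero, sub_div]

theorem hasDerivAt_sinh_mul_add_exp_neg_mul {F G : ℝ → ℝ} {c x : ℝ} (hs : s ≠ 0)
    (hF : HasDerivAt F (-(c * exp (-s * x))) x) (hG : HasDerivAt G (c * sinh (s * x)) x) :
    HasDerivAt (fun t => 1 / s * (sinh (s * t) * F t + exp (-s * t) * G t))
      (cosh (s * x) * F x - exp (-s * x) * G x) x := by
  have hsinh : HasDerivAt (fun t => sinh (s * t)) (cosh (s * x) * s) x := by
    simpa using ((hasDerivAt_id x).const_mul s).sinh
  have hexp : HasDerivAt (fun t => exp (-s * t)) (exp (-s * x) * -s) x := by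
    simpa using ((hasDerivAt_id x).const_mul (-s)).exp
  refine (((hsinh.mul hF).add (hexp.mul hG)).const_mul (1 / s)).congr_deriv ?_
  field_simp
  ring

variable {ψ : ℝ → ℝ} {a b x C : ℝ}

theorem integrableOn_mul_exp_neg_mul_Ioi (hs : 0 < s) (hψ : ContinuousOn ψ (Ioi a))
    (hC : ∀ y > a, |ψ y| ≤ C) : IntegrableOn (fun y => ψ y * exp (-s * y)) (Ioi a) :=
  (exp_neg_integrableOn_Ioi a hs).bdd_mul (hψ.aestronglyMeasurable measurableSet_Ioi)
    ((ae_restrict_iff' measurableSet_Ioi).2 (ae_of_all _ hC))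

theorem integrableOn_mul_sinh_mul_Ioo (hψ : ContinuousOn ψ (Ioo a b))
    (hC : ∀ y ∈ Ioo a b, |ψ y| ≤ C) : IntegrableOn (fun y => ψ y * sinh (s * y)) (Ioo a b) :=
  ((by fun_prop : Continuous fun y => sinh (s * y)).integrableOn_Icc.mono_set
    Ioo_subset_Icc_self).bdd_mul (hψ.aestronglyMeasurable measurableSet_Ioo)
    ((ae_restrict_iff' measurableSet_Ioo).2 (ae_of_all _ hC))

noncomputable def expTail (s : ℝ) (ψ : ℝ → ℝ) (x : ℝ) : ℝ := ∫ y in Ioi x, ψ y * exp (-s * y)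

noncomputable def sinhIntegral (s : ℝ) (ψ : ℝ → ℝ) (x : ℝ) : ℝ := ∫ y in Ioo 0 x, ψ y * sinh (s * y)

/-- `∫₀^∞ G(x, y) ψ(y) dy` with `G(x, y) = sinh (s min x y) exp (-s max x y) / s`, the Green's
function of `-u'' + s² u` on `(0, ∞)` with `u(0) = 0` and `u` bounded at infinity. -/
noncomputable def greenIntegral (s : ℝ) (ψ : ℝ → ℝ) (x : ℝ) : ℝ :=
  1 / s * (sinh (s * x) * expTail s ψ x + exp (-s * x) * sinhIntegral s ψ x)

theorem mul_exp_neg_mul_div_le_expTail (hs : 0 < s) (hmono : MonotoneOn ψ (Ici x))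
    (hint : IntegrableOn (fun y => ψ y * exp (-s * y)) (Ioi x)) :
    ψ x * (exp (-s * x) / s) ≤ expTail s ψ x := by
  rw [expTail, ← integral_Ioi_exp_neg_mul hs, ← integral_const_mul]
  refine setIntegral_mono_on ((exp_neg_integrableOn_Ioi x hs).const_mul (ψ x)) hint
    measurableSet_Ioi fun y hy => ?_
  exact mul_le_mul_of_nonneg_right (hmono self_mem_Ici (mem_Ici.2 hy.le) hy.le) (exp_pos _).le

theorem sinhIntegral_le_mul_cosh_mul_sub_one_div (hs : 0 < s) (hx : 0 < x)
    (hmono : MonotoneOn ψ (Ioc 0 x))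
    (hint : IntegrableOn (fun y => ψ y * sinh (s * y)) (Ioo 0 x)) :
    sinhIntegral s ψ x ≤ ψ x * ((cosh (s * x) - 1) / s) := by
  rw [sinhIntegral, ← integral_Ioo_sinh_mul hs.ne' hx.le, ← integral_const_mul]
  refine setIntegral_mono_on hint
    (((by fun_prop : Continuous fun y => ψ x * sinh (s * y)).integrableOn_Icc).mono_set
      Ioo_subset_Icc_self) measurableSet_Ioo fun y hy => ?_
  exact mul_le_mul_of_nonneg_right (hmono (Ioo_subset_Ioc_self hy) ⟨hx, le_rfl⟩ hy.2.le)
    (sinh_nonneg_iff.2 (mul_nonneg hs.le hy.1.le))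

section BoundedContinuous

variable (hs : 0 < s) (hψ : ContinuousOn ψ (Ioi 0)) (hC : ∀ y > 0, |ψ y| ≤ C)
include hs hψ hC

theorem hasDerivAt_greenIntegral (hx : 0 < x) :
    HasDerivAt (greenIntegral s ψ)
      (cosh (s * x) * expTail s ψ x - exp (-s * x) * sinhIntegral s ψ x) x := by
  have hψx : ContinuousAt ψ x := hψ.continuousAt (Ioi_mem_nhds hx)
  refine hasDerivAt_sinh_mul_add_exp_neg_mul hs.ne'
    (hasDerivAt_setIntegral_Ioi (integrableOn_mul_exp_neg_mul_Ioi hs hψ hC) hx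
      (hψx.mul (by fun_prop)))
    (hasDerivAt_setIntegral_Ioo (b := x + 1)
      (integrableOn_mul_sinh_mul_Ioo (hψ.mono Ioo_subset_Ioi_self) fun y hy => hC y hy.1)
      ⟨hx, lt_add_one x⟩ (hψx.mul (by fun_prop)))

theorem one_div_mul_exp_neg_mul_mul_le_cosh_mul_expTail_sub (hmono : MonotoneOn ψ (Ioi 0))
    (hx : 0 < x) :
    1 / s * exp (-s * x) * ψ x ≤
      cosh (s * x) * expTail s ψ x - exp (-s * x) * sinhIntegral s ψ x := by
  have htail := mul_exp_neg_mul_div_le_expTail hs (hmono.mono (Ici_subset_Ioi.2 hx))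
    ((integrableOn_mul_exp_neg_mul_Ioi hs hψ hC).mono_set (Ioi_subset_Ioi hx.le))
  have hhead := sinhIntegral_le_mul_cosh_mul_sub_one_div hs hx (hmono.mono Ioc_subset_Ioi_self)
    (integrableOn_mul_sinh_mul_Ioo (hψ.mono Ioo_subset_Ioi_self) fun y hy => hC y hy.1)
  calc 1 / s * exp (-s * x) * ψ x
      = cosh (s * x) * (ψ x * (exp (-s * x) / s))
        - exp (-s * x) * (ψ x * ((cosh (s * x) - 1) / s)) := by ring
    _ ≤ cosh (s * x) * expTail s ψ x - exp (-s * x) * sinhIntegral s ψ x := by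
      gcongr

end BoundedContinuous

end VariationOfParameters

open VariationOfParameters

theorem stmt2 (μ : ℝ) (hμ : 0 < μ) (ψ : ℝ → ℝ)
    (hpos : ∀ x > 0, 0 ≤ ψ x)
    (hmono : MonotoneOn ψ (Set.Ioi 0))
    (hcont : ContinuousOn ψ (Set.Ioi 0))
    (hbdd : ∃ Cb : ℝ, ∀ x > 0, ψ x ≤ Cb)
    (u : ℝ → ℝ)
    (hu : u = fun x => (1 / Real.sqrt μ) *
      (Real.sinh (Real.sqrt μ * x) *
        (∫ y in Set.Ioi x, ψ y * Real.exp (-(Real.sqrt μ) * y)) +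
       Real.exp (-(Real.sqrt μ) * x) *
        (∫ y in Set.Ioo 0 x, ψ y * Real.sinh (Real.sqrt μ * y)))) :
    (∀ x > 0,
      HasDerivAt u
        (Real.cosh (Real.sqrt μ * x) *
          (∫ y in Set.Ioi x, ψ y * Real.exp (-(Real.sqrt μ) * y)) -
         Real.exp (-(Real.sqrt μ) * x) *
          (∫ y in Set.Ioo 0 x, ψ y * Real.sinh (Real.sqrt μ * y))) x ∧
      (1 / Real.sqrt μ) * Real.exp (-(Real.sqrt μ) * x) * ψ x ≤
        Real.cosh (Real.sqrt μ * x) *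
          (∫ y in Set.Ioi x, ψ y * Real.exp (-(Real.sqrt μ) * y)) -
         Real.exp (-(Real.sqrt μ) * x) *
          (∫ y in Set.Ioo 0 x, ψ y * Real.sinh (Real.sqrt μ * y)) ∧
      (0 < ψ x →
        0 < Real.cosh (Real.sqrt μ * x) *
          (∫ y in Set.Ioi x, ψ y * Real.exp (-(Real.sqrt μ) * y)) -
         Real.exp (-(Real.sqrt μ) * x) *
          (∫ y in Set.Ioo 0 x, ψ y * Real.sinh (Real.sqrt μ * y)))) ∧
    MonotoneOn u (Set.Ioi 0) := by
  obtain ⟨C, hC⟩ := hbdd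
  have hs : 0 < Real.sqrt μ := Real.sqrt_pos.2 hμ
  have habs : ∀ y > 0, |ψ y| ≤ C := fun y hy =>
    abs_le.2 ⟨by linarith [hpos y hy, hC y hy], hC y hy⟩
  have hderiv (x : ℝ) (hx : 0 < x) := hasDerivAt_greenIntegral hs hcont habs hx
  have hbound (x : ℝ) (hx : 0 < x) :=
    one_div_mul_exp_neg_mul_mul_le_cosh_mul_expTail_sub hs hcont habs hmono hx
  subst hu
  refine ⟨fun x hx => ⟨hderiv x hx, hbound x hx, fun hψx => ?_⟩, ?_⟩
  · exact lt_of_lt_of_le (by positivity) (hbound x hx)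
  change MonotoneOn (greenIntegral (Real.sqrt μ) ψ) (Ioi 0)
  refine monotoneOn_of_deriv_nonneg (convex_Ioi 0)
    (fun x hx => (hderiv x hx).continuousAt.continuousWithinAt) ?_ ?_ <;> rw [interior_Ioi]
  · exact fun x hx => (hderiv x hx).differentiableAt.differentiableWithinAt
  · intro x hx
    rw [(hderiv x hx).deriv]
    exact (mul_nonneg (by positivity) (hpos x hx)).trans (hbound x hx)
end

section
/- Let μ_F > 0 and F* > 0, and suppose F : [0,∞) → ℝ is twice continuously differentiable, satisfies 0 ≤ F ≤ F*, F(0) = 0, F(x) → F* as x → ∞, and -F''(x) ≤ μ_F (F* - F(x)) for all x > 0. Then F(x) ≤ F*(1 - e^{-√μ_F x}) for all x ≥ 0. -/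
/-!
With `G x = F* (1 - exp (-√μ x))` we have `-G'' = μ (F* - G)`, so `w = F - G` satisfies
`w'' ≥ μ w` on `(0, ∞)`, together with `w 0 = 0` and `w → 0` at infinity. If `w` were positive
somewhere, it would attain a positive maximum at an interior point; there `w'' > 0`, so `w` is
strictly convex near that point, which is incompatible with a local maximum.
-/

open Filter Topology Set

theorem not_isLocalMax_of_deriv2_pos {f : ℝ → ℝ} {c : ℝ} (hf : ∀ᶠ x in 𝓝 c, ContinuousAt f x)
    (hf'' : ∀ᶠ x in 𝓝 c, 0 < deriv^[2] f x) : ¬IsLocalMax f c := by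
  intro hmax
  obtain ⟨ε, hε, hball⟩ := Metric.eventually_nhds_iff_ball.mp ((hf.and hf'').and hmax)
  obtain ⟨δ, hδ, hδε⟩ : ∃ δ, 0 < δ ∧ δ < ε := ⟨ε / 2, by positivity, by linarith⟩
  have hIcc : Icc (c - δ) (c + δ) ⊆ Metric.ball c ε := by
    rw [Real.ball_eq_Ioo]
    exact Icc_subset_Ioo (by linarith) (by linarith)
  have hconv : StrictConvexOn ℝ (Icc (c - δ) (c + δ)) f := by
    refine strictConvexOn_of_deriv2_pos (convex_Icc _ _)
      (fun x hx => (hball x (hIcc hx)).1.1.continuousWithinAt) fun x hx => ?_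
    rw [interior_Icc] at hx
    exact (hball x (hIcc (Ioo_subset_Icc_self hx))).1.2
  have hleft : c - δ ∈ Icc (c - δ) (c + δ) := ⟨le_rfl, by linarith⟩
  have hright : c + δ ∈ Icc (c - δ) (c + δ) := ⟨by linarith, le_rfl⟩
  have hmid := hconv.2 hleft hright (by linarith) (by norm_num : (0 : ℝ) < 1 / 2)
    (by norm_num : (0 : ℝ) < 1 / 2) (by norm_num)
  simp only [smul_eq_mul] at hmid
  rw [show 1 / 2 * (c - δ) + 1 / 2 * (c + δ) = c by ring] at hmid
  have hle_left := (hball _ (hIcc hleft)).2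
  have hle_right := (hball _ (hIcc hright)).2
  linarith

theorem exists_pos_isLocalMax_of_tendsto_zero {w : ℝ → ℝ} {a x₀ : ℝ}
    (hw : ContinuousOn w (Ici a)) (ha : w a ≤ 0) (hlim : Tendsto w atTop (𝓝 0))
    (hx₀ : a ≤ x₀) (hpos : 0 < w x₀) : ∃ c > a, 0 < w c ∧ IsLocalMax w c := by
  have hcocompact : ∀ᶠ x in cocompact ℝ ⊓ 𝓟 (Ici a), w x ≤ w x₀ := by
    rw [cocompact_eq_atBot_atTop, inf_sup_right, (disjoint_atBot_principal_Ici a).eq_bot,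
      bot_sup_eq]
    exact (hlim.eventually (ge_mem_nhds hpos)).filter_mono inf_le_left
  obtain ⟨c, hca, hmax⟩ := hw.exists_isMaxOn' isClosed_Ici hx₀ hcocompact
  have hwc : 0 < w c := hpos.trans_le (hmax hx₀)
  have hac : a < c := lt_of_le_of_ne hca (by rintro rfl; linarith)
  exact ⟨c, hac, hwc, hmax.isLocalMax (Ici_mem_nhds hac)⟩

theorem nonpos_of_tendsto_zero_of_deriv2_pos {w : ℝ → ℝ} {a : ℝ} (hw : ContinuousOn w (Ici a))
    (ha : w a ≤ 0) (hlim : Tendsto w atTop (𝓝 0))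
    (hw'' : ∀ x > a, 0 < w x → 0 < deriv^[2] w x) : ∀ x ≥ a, w x ≤ 0 := by
  intro x₀ hx₀
  by_contra! hpos
  obtain ⟨c, hac, hwc, hmax⟩ := exists_pos_isLocalMax_of_tendsto_zero hw ha hlim hx₀ hpos
  have hgt : ∀ᶠ x in 𝓝 c, a < x := Ioi_mem_nhds hac
  have hcont : ∀ᶠ x in 𝓝 c, ContinuousAt w x :=
    hgt.mono fun x hx => hw.continuousAt (Ici_mem_nhds hx)
  have hwpos : ∀ᶠ x in 𝓝 c, 0 < w x := hcont.self_of_nhds.eventually (lt_mem_nhds hwc)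
  exact not_isLocalMax_of_deriv2_pos hcont
    ((hgt.and hwpos).mono fun x hx => hw'' x hx.1 hx.2) hmax

noncomputable def saturatingExp (L s x : ℝ) : ℝ := L * (1 - Real.exp (-s * x))

theorem contDiff_saturatingExp (L s : ℝ) {n : WithTop ℕ∞} :
    ContDiff ℝ n (saturatingExp L s) := by
  unfold saturatingExp
  fun_prop

theorem iteratedDeriv_two_saturatingExp (L s x : ℝ) :
    iteratedDeriv 2 (saturatingExp L s) x = -s ^ 2 * (L - saturatingExp L s x) := by
  have hform : saturatingExp L s = fun y => L + -L * Real.exp (-s * y) := by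
    ext y
    simp only [saturatingExp]
    ring
  rw [hform, iteratedDeriv_const_add two_pos, iteratedDeriv_const_mul_field,
    iteratedDeriv_exp_const_mul]
  ring

theorem tendsto_saturatingExp_atTop (L : ℝ) {s : ℝ} (hs : 0 < s) :
    Tendsto (saturatingExp L s) atTop (𝓝 L) := by
  have hexp : Tendsto (fun x => Real.exp (-s * x)) atTop (𝓝 0) :=
    Real.tendsto_exp_atBot.comp (tendsto_id.const_mul_atTop_of_neg (neg_neg_of_pos hs))
  show Tendsto (fun x => L * (1 - Real.exp (-s * x))) atTop (𝓝 L)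
  simpa using (hexp.const_sub 1).const_mul L

theorem stmt3_general (μF Fstar : ℝ) (hμ : 0 < μF)
    (F : ℝ → ℝ) (hreg : ContDiff ℝ 2 F)
    (h0 : F 0 = 0)
    (hlim : Tendsto F atTop (𝓝 Fstar))
    (hsub : ∀ x > 0, -(deriv (deriv F)) x ≤ μF * (Fstar - F x)) :
    ∀ x ≥ 0, F x ≤ Fstar * (1 - Real.exp (-(Real.sqrt μF) * x)) := by
  set G := saturatingExp Fstar (Real.sqrt μF) with hG_def
  have hG : ContDiff ℝ 2 G := contDiff_saturatingExp _ _
  have hw'' (x : ℝ) : deriv^[2] (F - G) x = deriv (deriv F) x + μF * (Fstar - G x) := by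
    rw [← iteratedDeriv_eq_iterate, iteratedDeriv_sub hreg.contDiffAt hG.contDiffAt,
      iteratedDeriv_two_saturatingExp, Real.sq_sqrt hμ.le, iteratedDeriv_eq_iterate]
    simp only [Function.iterate_succ_apply, Function.iterate_zero_apply]
    ring
  have hwlim : Tendsto (F - G) atTop (𝓝 0) := by
    have := hlim.sub (tendsto_saturatingExp_atTop Fstar (Real.sqrt_pos.2 hμ))
    rwa [sub_self] at this
  have hsubsolution (y : ℝ) (hy : y > 0) (hpos : 0 < (F - G) y) : 0 < deriv^[2] (F - G) y := by
    have hμw := mul_pos hμ hpos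
    rw [Pi.sub_apply] at hμw
    rw [hw'' y]
    linarith [hsub y hy]
  intro x hx
  have hw := nonpos_of_tendsto_zero_of_deriv2_pos (hreg.continuous.sub hG.continuous).continuousOn
    (by simp [hG_def, saturatingExp, h0]) hwlim hsubsolution x hx
  simpa [hG_def, saturatingExp, sub_nonpos] using hw

theorem stmt3 (μF Fstar : ℝ) (hμ : 0 < μF) (hF : 0 < Fstar)
    (F : ℝ → ℝ) (hreg : ContDiff ℝ 2 F)
    (hbound : ∀ x ≥ 0, 0 ≤ F x ∧ F x ≤ Fstar)
    (h0 : F 0 = 0)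
    (hlim : Tendsto F atTop (𝓝 Fstar))
    (hsub : ∀ x > 0, -(deriv (deriv F)) x ≤ μF * (Fstar - F x)) :
    ∀ x ≥ 0, F x ≤ Fstar * (1 - Real.exp (-(Real.sqrt μF) * x)) :=
  stmt3_general μF Fstar hμ F hreg h0 hlim hsub
end

section
/- Let G : [0, F*] → ℝ be continuously differentiable with G(0) = 0 and G(F*) > 0, and let F_m ∈ (0, F*] be a point where G attains its maximum on [0, F*], chosen minimal so that G(F) < G(F_m) for all F < F_m. Then the Cauchy problem F' = √(2(G(F_m) - G(F))), F(0) = 0, has a solution F on [0,∞) which is nondecreasing, bounded by F_m, converges to F_m at +∞, and satisfies -F'' = G'(F) on the set where F < F_m. -/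
/-!
Conservation of the energy `½ F'² + G(F)` turns the problem into the autonomous equation
`F' = g(F)` with `g(u) = √(2(G(F_m) - G(u)))`, which is positive on `[0, F_m)` and vanishes at
`F_m`. Its solution is the inverse of the travel time `Φ(y) = ∫₀^y du / g(u)`, continued by the
constant `F_m` if `Φ` stays bounded; at the time `F_m` is reached the derivative is `0`, because
`g(F) → 0`. Differentiating `F' = g(F)` gives `F'' = g'(F) g(F) = -G'(F)`. At `x = 0` only a
one-sided derivative of `G` is available, and `F` is continued to `x < 0` by the quadratic with
curvature `-G'(0)` so that the two-sided second derivative has the right value.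
-/

open Filter Topology Set

/-- For `Φ` strictly increasing on `Iio m`, this inverts `Φ` on its image and is `m` above it. -/
noncomputable def invOnIio (Φ : ℝ → ℝ) (m x : ℝ) : ℝ := sSup {y | y < m ∧ Φ y ≤ x}

section invOnIio

variable {Φ : ℝ → ℝ} {m : ℝ}

lemma bddAbove_setOf_lt_and_le (x : ℝ) : BddAbove {y | y < m ∧ Φ y ≤ x} :=
  ⟨m, fun _ hy => hy.1.le⟩

lemma invOnIio_le (hunb : ∀ x, ∃ y < m, Φ y ≤ x) (x : ℝ) : invOnIio Φ m x ≤ m :=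
  csSup_le (hunb x) fun _ hy => hy.1.le

lemma monotone_invOnIio (hunb : ∀ x, ∃ y < m, Φ y ≤ x) : Monotone (invOnIio Φ m) :=
  fun x _ hxx' => csSup_le_csSup (bddAbove_setOf_lt_and_le _) (hunb x)
    fun _ hy => ⟨hy.1, hy.2.trans hxx'⟩

lemma invOnIio_apply (hΦ : StrictMonoOn Φ (Iio m)) {y : ℝ} (hy : y < m) :
    invOnIio Φ m (Φ y) = y :=
  le_antisymm (csSup_le ⟨y, hy, le_rfl⟩ fun _ hz => (hΦ.le_iff_le hz.1 hy).1 hz.2)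
    (le_csSup (bddAbove_setOf_lt_and_le _) ⟨hy, le_rfl⟩)

lemma Iio_subset_range_invOnIio (hΦ : StrictMonoOn Φ (Iio m)) :
    Iio m ⊆ range (invOnIio Φ m) :=
  fun y hy => ⟨Φ y, invOnIio_apply hΦ hy⟩

lemma apply_invOnIio (hc : ContinuousOn Φ (Iio m)) (hunb : ∀ x, ∃ y < m, Φ y ≤ x) {x : ℝ}
    (hx : invOnIio Φ m x < m) : Φ (invOnIio Φ m x) = x := by
  set y₀ := invOnIio Φ m x
  have hcy₀ : ContinuousAt Φ y₀ := hc.continuousAt (Iio_mem_nhds hx)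
  apply le_antisymm
  · by_contra! hlt
    obtain ⟨y, hxy, hy⟩ := mem_closure_iff_nhds.1
      (csSup_mem_closure (hunb x) (bddAbove_setOf_lt_and_le x)) _
      (hcy₀.eventually (lt_mem_nhds hlt))
    exact (hy.2.trans_lt hxy).false
  · by_contra! hlt
    obtain ⟨y, ⟨hΦy, hym⟩, hy₀y⟩ := (((hcy₀.eventually (gt_mem_nhds hlt)).and
      (Iio_mem_nhds hx)).filter_mono nhdsWithin_le_nhds |>.and
      (self_mem_nhdsWithin (s := Ioi y₀))).exists
    exact (le_csSup (bddAbove_setOf_lt_and_le x) ⟨hym, hΦy.le⟩).not_gt hy₀y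

lemma continuous_invOnIio (hΦ : StrictMonoOn Φ (Iio m)) (hunb : ∀ x, ∃ y < m, Φ y ≤ x) :
    Continuous (invOnIio Φ m) := by
  have hmono := monotone_invOnIio hunb
  have hrange := Iio_subset_range_invOnIio hΦ
  refine continuous_iff_continuousAt.2 fun x => continuousAt_iff_continuous_left_right.2 ⟨?_, ?_⟩
  · refine continuousWithinAt_left_of_monotoneOn_of_image_mem_nhdsWithin (hmono.monotoneOn _)
      univ_mem (mem_of_superset self_mem_nhdsWithin fun y hy => ?_)
    rw [image_univ]
    rcases (mem_Iic.1 hy).lt_or_eq with hlt | rfl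
    · exact hrange (hlt.trans_le (invOnIio_le hunb x))
    · exact mem_range_self x
  · rcases (invOnIio_le hunb x).lt_or_eq with hlt | heq
    · refine continuousWithinAt_right_of_monotoneOn_of_image_mem_nhdsWithin (hmono.monotoneOn _)
        univ_mem (nhdsWithin_le_nhds (mem_of_superset (Iio_mem_nhds hlt) ?_))
      rw [image_univ]
      exact hrange
    · refine continuousWithinAt_const.congr (fun y hy => ?_) heq
      exact le_antisymm (invOnIio_le hunb y) (heq.symm.trans_le (hmono hy))

lemma tendsto_invOnIio_atTop (hΦ : StrictMonoOn Φ (Iio m)) (hunb : ∀ x, ∃ y < m, Φ y ≤ x) :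
    Tendsto (invOnIio Φ m) atTop (𝓝 m) :=
  tendsto_atTop_isLUB (monotone_invOnIio hunb) <|
    isLUB_Iio.of_subset_of_superset isLUB_Iic (Iio_subset_range_invOnIio hΦ)
      (range_subset_iff.2 (invOnIio_le hunb))

lemma hasDerivAt_invOnIio (hΦ : StrictMonoOn Φ (Iio m)) (hc : ContinuousOn Φ (Iio m))
    (hunb : ∀ x, ∃ y < m, Φ y ≤ x) {x φ' : ℝ} (hx : invOnIio Φ m x < m)
    (hd : HasDerivAt Φ φ' (invOnIio Φ m x)) (hne : φ' ≠ 0) :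
    HasDerivAt (invOnIio Φ m) φ'⁻¹ x := by
  have hcont := (continuous_invOnIio hΦ hunb).continuousAt (x := x)
  exact hd.of_local_left_inverse hcont hne <|
    (hcont.eventually (Iio_mem_nhds hx)).mono fun _ hy => apply_invOnIio hc hunb hy

end invOnIio

lemma Monotone.hasDerivAt_of_hasDerivAt_of_lt {f h : ℝ → ℝ} {m : ℝ} (hf : Monotone f)
    (hfc : Continuous f) (hle : ∀ t, f t ≤ m) (hh : ContinuousWithinAt h (Iic m) m)
    (hhm : h m = 0) (hd : ∀ t, f t < m → HasDerivAt f (h (f t)) t) (t : ℝ) :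
    HasDerivAt f (h (f t)) t := by
  have plateau : ∀ s u, s < u → f s = m → HasDerivAt f (h (f u)) u := by
    intro s u hsu hs
    have hconst : ∀ v, s ≤ v → f v = m := fun v hv => le_antisymm (hle v) (hs ▸ hf hv)
    rw [hconst u hsu.le, hhm]
    exact (hasDerivAt_const u m).congr_of_eventuallyEq <|
      eventually_of_mem (Ioi_mem_nhds hsu) fun v hv => hconst v (le_of_lt hv)
  rcases (hle t).lt_or_eq with hlt | rfl
  · exact hd t hlt
  by_cases hfirst : ∃ s < t, f s = f t
  · obtain ⟨s, hst, hs⟩ := hfirst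
    exact plateau s t hst hs
  push Not at hfirst
  refine hasDerivAt_of_hasDerivAt_of_ne (fun s hs => ?_) hfc.continuousAt
    (continuousWithinAt_univ _ _ |>.1 <|
      hh.comp hfc.continuousWithinAt fun s _ => hle s)
  rcases hs.lt_or_gt with hlt | hgt
  · exact hd s ((hle s).lt_of_ne (hfirst s hlt))
  · exact plateau t s hgt rfl

/-- `Φ(y) = ∫₀^y du / g(max u 0)`; freezing the field at `g 0` for `u < 0` makes `Φ` linear, hence
unbounded below, on `Iic 0`. -/
lemma exists_strictMonoOn_hasDerivAt_inv {g : ℝ → ℝ} {m : ℝ} (hm : 0 < m)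
    (hg : ContinuousOn g (Icc 0 m)) (hpos : ∀ u ∈ Ico 0 m, 0 < g u) :
    ∃ Φ : ℝ → ℝ, Φ 0 = 0 ∧ StrictMonoOn Φ (Iio m) ∧ (∀ x, ∃ y < m, Φ y ≤ x) ∧
      ∀ y < m, HasDerivAt Φ (g (max y 0))⁻¹ y := by
  set ψ : ℝ → ℝ := fun u => (g (max u 0))⁻¹
  have hclip : MapsTo (fun u : ℝ => max u 0) (Iio m) (Ico 0 m) :=
    fun u hu => ⟨le_max_right u 0, max_lt hu hm⟩
  have hψpos : ∀ u < m, 0 < ψ u := fun u hu => inv_pos.2 (hpos _ (hclip hu))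
  have hψc : ContinuousOn ψ (Iio m) :=
    ((hg.mono Ico_subset_Icc_self).comp (by fun_prop) hclip).inv₀
      fun u hu => (hpos _ (hclip hu)).ne'
  have hΦ : ∀ y < m, HasDerivAt (fun z => ∫ u in (0 : ℝ)..z, ψ u) (ψ y) y := fun y hy =>
    intervalIntegral.integral_hasDerivAt_right
      ((hψc.mono fun u hu => hu.2.trans_lt (max_lt hm hy)).intervalIntegrable)
      (hψc.stronglyMeasurableAtFilter isOpen_Iio y hy) (hψc.continuousAt (Iio_mem_nhds hy))
  have hmono : StrictMonoOn (fun z => ∫ u in (0 : ℝ)..z, ψ u) (Iio m) :=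
    strictMonoOn_of_deriv_pos (convex_Iio m)
      (fun y hy => (hΦ y hy).continuousAt.continuousWithinAt) fun y hy => by
        rw [interior_Iio] at hy
        exact (hΦ y hy).deriv ▸ hψpos y hy
  have hneg : ∀ y ≤ 0, ∫ u in (0 : ℝ)..y, ψ u = y * ψ 0 := by
    intro y hy
    rw [intervalIntegral.integral_congr (g := fun _ => ψ 0), intervalIntegral.integral_const,
      smul_eq_mul, sub_zero]
    intro u hu
    simp only [ψ, max_eq_right (hu.2.trans (max_le le_rfl hy)), max_self]
  refine ⟨_, intervalIntegral.integral_same, hmono, fun x => ?_, hΦ⟩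
  refine ⟨min (x / ψ 0) 0, (min_le_right _ _).trans_lt hm, ?_⟩
  rw [hneg _ (min_le_right _ _)]
  calc min (x / ψ 0) 0 * ψ 0 ≤ x / ψ 0 * ψ 0 :=
        mul_le_mul_of_nonneg_right (min_le_left _ _) (hψpos 0 hm).le
    _ = x := div_mul_cancel₀ x (hψpos 0 hm).ne'

theorem exists_monotone_hasDerivAt_tendsto {g : ℝ → ℝ} {m : ℝ} (hm : 0 < m)
    (hg : ContinuousOn g (Icc 0 m)) (hpos : ∀ u ∈ Ico 0 m, 0 < g u) (hgm : g m = 0) :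
    ∃ f : ℝ → ℝ, f 0 = 0 ∧ Monotone f ∧ (∀ t, f t ≤ m) ∧ (∀ t > 0, 0 < f t) ∧
      Tendsto f atTop (𝓝 m) ∧ ∀ t ≥ 0, HasDerivAt f (g (f t)) t := by
  obtain ⟨Φ, hΦ0, hΦ, hunb, hΦd⟩ := exists_strictMonoOn_hasDerivAt_inv hm hg hpos
  have hΦc : ContinuousOn Φ (Iio m) := fun y hy => (hΦd y hy).continuousAt.continuousWithinAt
  set f := invOnIio Φ m
  have hf0 : f 0 = 0 := by simpa [hΦ0] using invOnIio_apply hΦ hm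
  have hmono : Monotone f := monotone_invOnIio hunb
  have hle : ∀ t, f t ≤ m := invOnIio_le hunb
  have hgclip : ContinuousWithinAt (fun u => g (max u 0)) (Iic m) m := by
    have hgm' : ContinuousWithinAt g (Icc 0 m) (max m 0) := by
      rw [max_eq_left hm.le]
      exact hg m ⟨hm.le, le_rfl⟩
    exact hgm'.comp (f := fun u => max u 0) (x := m)
      (continuous_id.max continuous_const).continuousWithinAt
      fun u hu => ⟨le_max_right u 0, max_le hu hm.le⟩
  have hd : ∀ t, HasDerivAt f (g (max (f t) 0)) t := by
    refine hmono.hasDerivAt_of_hasDerivAt_of_lt (continuous_invOnIio hΦ hunb) hle hgclip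
      (by simp [hm.le, hgm]) fun t ht => ?_
    simpa using hasDerivAt_invOnIio hΦ hΦc hunb ht (hΦd _ ht)
      (inv_ne_zero (hpos _ ⟨le_max_right _ _, max_lt ht hm⟩).ne')
  refine ⟨f, hf0, hmono, hle, fun t ht => ?_, tendsto_invOnIio_atTop hΦ hunb, fun t ht => ?_⟩
  · rcases (hle t).lt_or_eq with hlt | heq
    · refine (hf0 ▸ hmono ht.le).lt_of_ne fun h => ht.ne ?_
      rw [← apply_invOnIio hΦc hunb hlt]
      exact hΦ0.symm.trans (congrArg Φ h)
    · exact heq ▸ hm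
  · simpa [max_eq_left (hf0 ▸ hmono ht)] using hd t

lemma deriv_eq_zero_of_hasDerivWithinAt_Iic_Ici {f : ℝ → ℝ} {a b x : ℝ}
    (hl : HasDerivWithinAt f a (Iic x) x) (hr : HasDerivWithinAt f b (Ici x) x) (hab : a ≠ b) :
    deriv f x = 0 :=
  deriv_zero_of_not_differentiableAt fun hd => hab <|
    ((uniqueDiffWithinAt_Iic x).eq_deriv _ hl hd.hasDerivAt.hasDerivWithinAt).trans
      ((uniqueDiffWithinAt_Ici x).eq_deriv _ hd.hasDerivAt.hasDerivWithinAt hr)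

/-- If `G` is not differentiable at `y`, both sides are the junk value `0`. -/
lemma neg_deriv_eq_deriv_of_hasDerivWithinAt_Iic_Ici {φ G : ℝ → ℝ} {s : Set ℝ} {b x y : ℝ}
    (hs : UniqueDiffWithinAt ℝ s y) (hG : HasDerivWithinAt G b s y)
    (hl : HasDerivWithinAt φ (-deriv G y) (Iic x) x) (hr : HasDerivWithinAt φ (-b) (Ici x) x) :
    -deriv φ x = deriv G y := by
  by_cases hGd : DifferentiableAt ℝ G y
  · have hb : deriv G y = b := hs.eq_deriv _ hGd.hasDerivAt.hasDerivWithinAt hG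
    rw [hb] at hl ⊢
    rw [(by simpa using hl.union hr : HasDerivAt φ (-b) x).deriv, neg_neg]
  · rw [deriv_zero_of_not_differentiableAt hGd] at hl ⊢
    rw [neg_zero] at hl
    rcases eq_or_ne b 0 with rfl | hb
    · rw [neg_zero] at hr
      rw [(by simpa using hl.union hr : HasDerivAt φ 0 x).deriv, neg_zero]
    · rw [deriv_eq_zero_of_hasDerivWithinAt_Iic_Ici hl hr (neg_ne_zero.2 hb).symm, neg_zero]

lemma hasDerivWithinAt_deriv_of_hasDerivAt_sqrt {f G : ℝ → ℝ} {M G' x : ℝ} {s t : Set ℝ}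
    (hf : ∀ y ∈ s, HasDerivAt f (√(2 * (M - G (f y)))) y) (hx : x ∈ s)
    (hG : HasDerivWithinAt G G' t (f x)) (hst : MapsTo f s t) (hGx : G (f x) < M) :
    HasDerivWithinAt (deriv f) (-G') s x := by
  have hpos : 0 < √(2 * (M - G (f x))) := Real.sqrt_pos.2 (by linarith)
  have hsqrt := (((hG.comp x (hf x hx).hasDerivWithinAt hst).const_sub M).const_mul 2).sqrt
    (by simp only [Function.comp_apply]; linarith)
  refine (hsqrt.congr (fun y hy => (hf y hy).deriv) (hf x hx).deriv).congr_deriv ?_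
  simp only [Function.comp_apply]
  field_simp

noncomputable def extendLeft (f : ℝ → ℝ) (v a x : ℝ) : ℝ :=
  if x < 0 then v * x - a * x ^ 2 / 2 else f x

section extendLeft

variable {f : ℝ → ℝ} {v a x : ℝ}

lemma extendLeft_of_nonneg (hx : 0 ≤ x) : extendLeft f v a x = f x := if_neg hx.not_gt

lemma hasDerivAt_extendLeft_of_nonpos (hf0 : f 0 = 0) (hf : HasDerivWithinAt f v (Ici 0) 0)
    (hx : x ≤ 0) : HasDerivAt (extendLeft f v a) (v - a * x) x := by
  have hpoly : ∀ y, HasDerivAt (fun y => v * y - a * y ^ 2 / 2) (v - a * y) y := fun y =>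
    (((hasDerivAt_id' y).const_mul v).sub
      (((hasDerivAt_pow 2 y).const_mul a).div_const 2)).congr_deriv (by ring)
  rcases hx.lt_or_eq with hx | rfl
  · exact (hpoly x).congr_of_eventuallyEq <|
      eventually_of_mem (Iio_mem_nhds hx) fun y hy => if_pos hy
  · have hl : HasDerivWithinAt (extendLeft f v a) v (Iic 0) 0 := by
      have h0 : HasDerivWithinAt (fun y => v * y - a * y ^ 2 / 2) v (Iic 0) 0 := by
        simpa using (hpoly 0).hasDerivWithinAt
      refine h0.congr (fun y hy => ?_) (by simp [extendLeft, hf0])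
      rcases (mem_Iic.1 hy).lt_or_eq with hy | rfl
      · exact if_pos hy
      · simp [extendLeft, hf0]
    have hr : HasDerivWithinAt (extendLeft f v a) v (Ici 0) 0 :=
      hf.congr (fun y hy => extendLeft_of_nonneg hy) (extendLeft_of_nonneg le_rfl)
    simpa using hl.union hr

lemma hasDerivWithinAt_deriv_extendLeft (hf0 : f 0 = 0) (hf : HasDerivWithinAt f v (Ici 0) 0) :
    HasDerivWithinAt (deriv (extendLeft f v a)) (-a) (Iic 0) 0 := by
  have hlin : HasDerivAt (fun y => v - a * y) (-a) 0 := by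
    simpa using ((hasDerivAt_id (0 : ℝ)).const_mul a).const_sub v
  exact hlin.hasDerivWithinAt.congr (fun y hy => (hasDerivAt_extendLeft_of_nonpos hf0 hf hy).deriv)
    (hasDerivAt_extendLeft_of_nonpos hf0 hf le_rfl).deriv

lemma hasDerivAt_extendLeft {g : ℝ → ℝ} (hf0 : f 0 = 0)
    (hf : ∀ t ≥ 0, HasDerivAt f (g (f t)) t) (hx : 0 ≤ x) :
    HasDerivAt (extendLeft f (g 0) a) (g (extendLeft f (g 0) a x)) x := by
  rw [extendLeft_of_nonneg hx]
  rcases hx.eq_or_lt with rfl | hx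
  · have hf' : HasDerivWithinAt f (g 0) (Ici 0) 0 := by
      simpa [hf0] using (hf 0 le_rfl).hasDerivWithinAt
    simpa [hf0] using hasDerivAt_extendLeft_of_nonpos (a := a) hf0 hf' le_rfl
  · exact (hf x hx.le).congr_of_eventuallyEq <|
      eventually_of_mem (Ioi_mem_nhds hx) fun y hy => extendLeft_of_nonneg (le_of_lt hy)

end extendLeft

lemma neg_deriv_deriv_eq_of_hasDerivAt_sqrt {F G : ℝ → ℝ} {c M x : ℝ}
    (hG : DifferentiableOn ℝ G (Icc 0 c)) (hF : ∀ t ≥ 0, HasDerivAt F (√(2 * (M - G (F t)))) t)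
    (hmaps : MapsTo F (Ici 0) (Icc 0 c)) (hpos : ∀ t > 0, 0 < F t)
    (hleft : HasDerivWithinAt (deriv F) (-deriv G (F 0)) (Iic 0) 0) (hx : 0 ≤ x)
    (hFx : F x < c) (hGx : G (F x) < M) :
    -deriv (deriv F) x = deriv G (F x) := by
  have hxc : F x ∈ Icc 0 c := hmaps hx
  have hright : ∀ {G'}, HasDerivWithinAt G G' (Icc 0 c) (F x) →
      HasDerivWithinAt (deriv F) (-G') (Ici 0) x := fun hG' =>
    hasDerivWithinAt_deriv_of_hasDerivAt_sqrt hF hx hG' hmaps hGx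
  rcases hx.eq_or_lt with rfl | hx
  · exact neg_deriv_eq_deriv_of_hasDerivWithinAt_Iic_Ici
      (uniqueDiffOn_Icc (hxc.1.trans_lt hFx) _ hxc) (hG _ hxc).hasDerivWithinAt hleft
      (hright (hG _ hxc).hasDerivWithinAt)
  · have hGd : HasDerivAt G (deriv G (F x)) (F x) :=
      ((hG _ hxc).differentiableAt (Icc_mem_nhds (hpos x hx) hFx)).hasDerivAt
    rw [(hright hGd.hasDerivWithinAt).hasDerivAt (Ici_mem_nhds hx) |>.deriv, neg_neg]

theorem stmt4_general (Fstar : ℝ)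
    (G : ℝ → ℝ) (hG : ContDiffOn ℝ 1 G (Set.Icc 0 Fstar))
    (Fm : ℝ) (hFm : Fm ∈ Set.Ioc 0 Fstar)
    (hminimal : ∀ u ∈ Set.Icc 0 Fstar, u < Fm → G u < G Fm) :
    ∃ F : ℝ → ℝ, F 0 = 0 ∧
      (∀ x ≥ 0, HasDerivAt F (Real.sqrt (2 * (G Fm - G (F x)))) x) ∧
      MonotoneOn F (Set.Ici 0) ∧
      (∀ x ≥ 0, 0 ≤ F x ∧ F x ≤ Fm) ∧
      Tendsto F atTop (𝓝 Fm) ∧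
      (∀ x ≥ 0, F x < Fm → -(deriv (deriv F)) x = deriv G (F x)) := by
  obtain ⟨hFm0, hFmFs⟩ := hFm
  have hsub : Icc 0 Fm ⊆ Icc 0 Fstar := Icc_subset_Icc_right hFmFs
  have hGlt : ∀ u ∈ Ico 0 Fm, G u < G Fm := fun u hu =>
    hminimal u (hsub (Ico_subset_Icc_self hu)) hu.2
  obtain ⟨f, hf0, hfmono, hfle, hfpos, hflim, hf⟩ :=
    exists_monotone_hasDerivAt_tendsto (g := fun u => √(2 * (G Fm - G u))) hFm0
      (continuousOn_const.mul (continuousOn_const.sub (hG.continuousOn.mono hsub))).sqrt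
      (fun u hu => Real.sqrt_pos.2 (by linarith [hGlt u hu])) (by simp)
  set F := extendLeft f (√(2 * (G Fm - G 0))) (deriv G 0)
  have hFf : ∀ x ≥ 0, F x = f x := fun x hx => extendLeft_of_nonneg hx
  have hF0 : F 0 = 0 := (hFf 0 le_rfl).trans hf0
  have hF : ∀ x ≥ 0, HasDerivAt F (√(2 * (G Fm - G (F x)))) x := fun x hx =>
    hasDerivAt_extendLeft (g := fun u => √(2 * (G Fm - G u))) hf0 hf hx
  have hFmem : ∀ x ≥ 0, F x ∈ Icc 0 Fm := fun x hx =>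
    hFf x hx ▸ ⟨hf0 ▸ hfmono hx, hfle x⟩
  have hleft : HasDerivWithinAt (deriv F) (-deriv G (F 0)) (Iic 0) 0 := by
    rw [hF0]
    refine hasDerivWithinAt_deriv_extendLeft hf0 ?_
    simpa only [hf0] using (hf 0 le_rfl).hasDerivWithinAt
  refine ⟨F, hF0, hF, fun x hx y hy hxy => ?_, hFmem, hflim.congr' ?_, fun x hx hlt => ?_⟩
  · rw [hFf x hx, hFf y hy]
    exact hfmono hxy
  · filter_upwards [eventually_ge_atTop 0] with x hx using (hFf x hx).symm
  · exact neg_deriv_deriv_eq_of_hasDerivAt_sqrt (hG.differentiableOn one_ne_zero) hF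
      (fun t ht => hsub (hFmem t ht)) (fun t ht => hFf t ht.le ▸ hfpos t ht) hleft hx
      (hlt.trans_le hFmFs) (hGlt _ ⟨(hFmem x hx).1, hlt⟩)

theorem stmt4 (Fstar : ℝ) (hFs : 0 < Fstar)
    (G : ℝ → ℝ) (hG : ContDiffOn ℝ 1 G (Set.Icc 0 Fstar))
    (hG0 : G 0 = 0) (hGpos : 0 < G Fstar)
    (Fm : ℝ) (hFm : Fm ∈ Set.Ioc 0 Fstar)
    (hmax : ∀ u ∈ Set.Icc 0 Fstar, G u ≤ G Fm)
    (hminimal : ∀ u ∈ Set.Icc 0 Fstar, u < Fm → G u < G Fm) :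
    ∃ F : ℝ → ℝ, F 0 = 0 ∧
      (∀ x ≥ 0, HasDerivAt F (Real.sqrt (2 * (G Fm - G (F x)))) x) ∧
      MonotoneOn F (Set.Ici 0) ∧
      (∀ x ≥ 0, 0 ≤ F x ∧ F x ≤ Fm) ∧
      Tendsto F atTop (𝓝 Fm) ∧
      (∀ x ≥ 0, F x < Fm → -(deriv (deriv F)) x = deriv G (F x)) :=
  stmt4_general Fstar G hG Fm hFm hminimal
end

section
/- Let c' > 0, r₁ > 0, μ > 0, and set λ± = (-(c' + 1/r₁) ± √((c'+1/r₁)² + 2μ))/2. Define β(r) = λ₊ e^{λ₋ r} - λ₋ e^{λ₊ r} for r ≥ 0. Then β is positive and strictly increasing on [0,∞), and β'(r) < √(μ/2)·β(r) for all r > 0. -/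
open Set Real

/-!
Both terms of `β = λ₊ e^{λ₋ r} - λ₋ e^{λ₊ r}` are positive since `λ₋ < 0 < λ₊`, and
`β' = λ₊λ₋ (e^{λ₋ r} - e^{λ₊ r})` is positive for `r > 0`. With `k = √(μ/2) = √(-λ₊λ₋)`,
`kβ - β' = λ₊ (k - λ₋) e^{λ₋ r} + (-λ₋)(k - λ₊) e^{λ₊ r}`, and `λ₊ < k < -λ₋` because
`λ₊ < -λ₋` (this is where `c' + 1/r₁ > 0` enters, as `λ₊ + λ₋ = -(c' + 1/r₁)`).
-/

noncomputable def expComb (p m r : ℝ) : ℝ := p * exp (m * r) - m * exp (p * r)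

theorem hasDerivAt_expComb (p m r : ℝ) :
    HasDerivAt (expComb p m) (p * m * (exp (m * r) - exp (p * r))) r := by
  have hm : HasDerivAt (fun r => exp (m * r)) (exp (m * r) * m) r :=
    (hasDerivAt_exp _).comp r ((hasDerivAt_id r).const_mul m |>.congr_deriv (mul_one m))
  have hp : HasDerivAt (fun r => exp (p * r)) (exp (p * r) * p) r :=
    (hasDerivAt_exp _).comp r ((hasDerivAt_id r).const_mul p |>.congr_deriv (mul_one p))
  exact ((hm.const_mul p).sub (hp.const_mul m)).congr_deriv (by ring)

section

variable {p m : ℝ}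

theorem expComb_pos (hp : 0 < p) (hm : m < 0) (r : ℝ) : 0 < expComb p m r := by
  have h₁ : 0 < p * exp (m * r) := mul_pos hp (exp_pos _)
  have h₂ : 0 < -m * exp (p * r) := mul_pos (neg_pos.2 hm) (exp_pos _)
  unfold expComb
  linarith

theorem strictMonoOn_expComb (hp : 0 < p) (hm : m < 0) : StrictMonoOn (expComb p m) (Ici 0) := by
  refine strictMonoOn_of_deriv_pos (convex_Ici 0)
    (fun r _ => (hasDerivAt_expComb p m r).continuousAt.continuousWithinAt) fun r hr => ?_
  rw [interior_Ici] at hr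
  rw [(hasDerivAt_expComb p m r).deriv]
  have hexp : exp (m * r) < exp (p * r) :=
    exp_lt_exp.2 (mul_lt_mul_of_pos_right (hm.trans hp) hr)
  exact mul_pos_of_neg_of_neg (mul_neg_of_pos_of_neg hp hm) (sub_neg.2 hexp)

theorem deriv_expComb_lt (hp : 0 < p) (hpm : p < -m) (r : ℝ) :
    deriv (expComb p m) r < sqrt (-(p * m)) * expComb p m r := by
  set k := sqrt (-(p * m))
  have hm : m < 0 := by linarith
  have hk₁ : p < k := lt_sqrt hp.le |>.2 (by nlinarith)
  have hk₂ : k < -m := (sqrt_lt' (by linarith)).2 (by nlinarith)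
  have h₁ : 0 < p * (k - m) * exp (m * r) :=
    mul_pos (mul_pos hp (by linarith)) (exp_pos _)
  have h₂ : 0 < -m * (k - p) * exp (p * r) :=
    mul_pos (mul_pos (by linarith) (by linarith)) (exp_pos _)
  have hdiff : k * expComb p m r - p * m * (exp (m * r) - exp (p * r)) =
      p * (k - m) * exp (m * r) + -m * (k - p) * exp (p * r) := by
    unfold expComb; ring
  rw [(hasDerivAt_expComb p m r).deriv]
  linarith

end

theorem quadratic_roots_pos_lt_neg_mul_eq {a μ lp lm : ℝ} (ha : 0 < a) (hμ : 0 < μ)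
    (hlp : lp = (-a + sqrt (a ^ 2 + 2 * μ)) / 2) (hlm : lm = (-a - sqrt (a ^ 2 + 2 * μ)) / 2) :
    0 < lp ∧ lp < -lm ∧ lp * lm = -(μ / 2) := by
  have hs : sqrt (a ^ 2 + 2 * μ) ^ 2 = a ^ 2 + 2 * μ := sq_sqrt (by positivity)
  have has : a < sqrt (a ^ 2 + 2 * μ) := lt_sqrt ha.le |>.2 (by linarith)
  subst hlp hlm
  exact ⟨by linarith, by linarith, by nlinarith⟩

theorem stmt7 (c' r₁ μ : ℝ) (hc : 0 < c') (hr : 0 < r₁) (hμ : 0 < μ)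
    (lp lm : ℝ)
    (hlp : lp = (-(c' + 1 / r₁) + Real.sqrt ((c' + 1 / r₁) ^ 2 + 2 * μ)) / 2)
    (hlm : lm = (-(c' + 1 / r₁) - Real.sqrt ((c' + 1 / r₁) ^ 2 + 2 * μ)) / 2)
    (β : ℝ → ℝ)
    (hβ : β = fun r => lp * Real.exp (lm * r) - lm * Real.exp (lp * r)) :
    (∀ r ≥ (0:ℝ), 0 < β r) ∧
    StrictMonoOn β (Set.Ici 0) ∧
    (∀ r > (0:ℝ), deriv β r < Real.sqrt (μ / 2) * β r) := by
  obtain ⟨hlp₀, hlt, hprod⟩ := quadratic_roots_pos_lt_neg_mul_eq (by positivity) hμ hlp hlm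
  have hlm₀ : lm < 0 := by linarith
  have hβ' : β = expComb lp lm := hβ
  subst hβ'
  refine ⟨fun r _ => expComb_pos hlp₀ hlm₀ r, strictMonoOn_expComb hlp₀ hlm₀, fun r _ => ?_⟩
  simpa only [hprod, neg_neg] using deriv_expComb_lt hlp₀ hlt r
end

section
/- Let c > c' > (2/3)c > 0, r₁ > 0, μ > 0, u₀ > 0, and set λ± = (-(c'+1/r₁) ± √((c'+1/r₁)²+2μ))/2. Define α(t) = u₀ / (λ₊ e^{λ₋(c-c')t} - λ₋ e^{λ₊(c-c')t}) for t ≥ 0. Then α is positive and strictly decreasing on [0,∞), α(t) → 0 as t → ∞, and α'(t) > -(μ/4)·α(t) for all t ≥ 0. -/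
/-!
Write `α = u₀ / D` with `D t = λ₊ e^{λ₋ k t} - λ₋ e^{λ₊ k t}` and `k = c - c'`. Since `λ₋ < 0 < λ₊`,
`D` is positive, tends to `∞`, and `D' = (μ/2) k (e^{λ₊ k t} - e^{λ₋ k t})` (using `λ₊ λ₋ = -μ/2`) is
positive for `t > 0`; this gives positivity, monotonicity and the limit of `α`. The derivative bound
`α' > -(μ/4) α` is equivalent to `D' < (μ/4) D`, which holds as soon as `2k ≤ -λ₋`; and
`-λ₋ > c' + 1/r₁ > c' > 2k` because `c' > 2c/3`.
-/

open Filter Topology Set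

noncomputable def expDenom (p m k t : ℝ) : ℝ :=
  p * Real.exp (m * k * t) - m * Real.exp (p * k * t)

section QuadraticRoots

variable {a μ : ℝ}

lemma abs_lt_sqrt_sq_add (hμ : 0 < μ) : |a| < Real.sqrt (a ^ 2 + 2 * μ) :=
  (Real.lt_sqrt (abs_nonneg a)).2 (by rw [sq_abs]; linarith)

lemma quadRoot_add_pos (hμ : 0 < μ) : 0 < (-a + Real.sqrt (a ^ 2 + 2 * μ)) / 2 := by
  linarith [le_abs_self a, abs_lt_sqrt_sq_add (a := a) hμ]

lemma quadRoot_sub_neg (hμ : 0 < μ) : (-a - Real.sqrt (a ^ 2 + 2 * μ)) / 2 < 0 := by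
  linarith [neg_abs_le a, abs_lt_sqrt_sq_add (a := a) hμ]

lemma lt_neg_quadRoot_sub (hμ : 0 < μ) : a < -((-a - Real.sqrt (a ^ 2 + 2 * μ)) / 2) := by
  linarith [le_abs_self a, abs_lt_sqrt_sq_add (a := a) hμ]

lemma quadRoot_add_mul_quadRoot_sub (hμ : 0 ≤ μ) :
    (-a + Real.sqrt (a ^ 2 + 2 * μ)) / 2 * ((-a - Real.sqrt (a ^ 2 + 2 * μ)) / 2) = -(μ / 2) := by
  have := Real.sq_sqrt (show 0 ≤ a ^ 2 + 2 * μ by positivity)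
  linear_combination (-1 / 4 : ℝ) * this

end QuadraticRoots

namespace expDenom

variable {p m k : ℝ}

lemma pos (hp : 0 < p) (hm : m < 0) (t : ℝ) : 0 < expDenom p m k t := by
  unfold expDenom
  nlinarith [mul_pos hp (Real.exp_pos (m * k * t)),
    mul_pos (neg_pos.2 hm) (Real.exp_pos (p * k * t))]

lemma hasDerivAt (t : ℝ) :
    HasDerivAt (expDenom p m k) (p * m * k * (Real.exp (m * k * t) - Real.exp (p * k * t))) t := by
  have hexp (r : ℝ) : HasDerivAt (fun t => Real.exp (r * t)) (Real.exp (r * t) * r) t := by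
    simpa using ((hasDerivAt_id t).const_mul r).exp
  have := ((hexp (m * k)).const_mul p).sub ((hexp (p * k)).const_mul m)
  simp only [← mul_assoc] at this
  exact this.congr_deriv (by ring)

lemma deriv_pos (hp : 0 < p) (hm : m < 0) (hk : 0 < k) {t : ℝ} (ht : 0 < t) :
    0 < p * m * k * (Real.exp (m * k * t) - Real.exp (p * k * t)) := by
  have hlt : Real.exp (m * k * t) < Real.exp (p * k * t) :=
    Real.exp_lt_exp.2 (mul_lt_mul_of_pos_right (mul_lt_mul_of_pos_right (by linarith) hk) ht)
  have : p * m * k < 0 := mul_neg_of_neg_of_pos (mul_neg_of_pos_of_neg hp hm) hk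
  nlinarith

lemma strictMonoOn (hp : 0 < p) (hm : m < 0) (hk : 0 < k) :
    StrictMonoOn (expDenom p m k) (Ici 0) := by
  refine strictMonoOn_of_deriv_pos (convex_Ici 0)
    (fun t _ => (hasDerivAt t).continuousAt.continuousWithinAt) fun t ht => ?_
  rw [interior_Ici] at ht
  rw [(hasDerivAt t).deriv]
  exact deriv_pos hp hm hk ht

lemma tendsto_atTop (hp : 0 < p) (hm : m < 0) (hk : 0 < k) :
    Tendsto (expDenom p m k) atTop atTop := by
  have hdecay : Tendsto (fun t => p * Real.exp (m * k * t)) atTop (𝓝 0) := by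
    simpa using (Real.tendsto_exp_atBot.comp
      (tendsto_id.const_mul_atTop_of_neg (mul_neg_of_neg_of_pos hm hk))).const_mul p
  have hgrow : Tendsto (fun t => -m * Real.exp (p * k * t)) atTop atTop :=
    (Real.tendsto_exp_atTop.comp (tendsto_id.const_mul_atTop (mul_pos hp hk))).const_mul_atTop
      (neg_pos.2 hm)
  exact (hdecay.add_atTop hgrow).congr fun t => by simp only [expDenom]; ring

lemma deriv_lt (hp : 0 < p) (hm : m < 0) (hk : 0 ≤ k) (h2k : 2 * k ≤ -m) (t : ℝ) :
    p * m * k * (Real.exp (m * k * t) - Real.exp (p * k * t)) <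
      -(p * m / 2) * expDenom p m k t := by
  have e₁ := Real.exp_pos (m * k * t)
  have e₂ := Real.exp_pos (p * k * t)
  have hpm : 0 < -(p * m) := by nlinarith
  unfold expDenom
  nlinarith [mul_nonneg (mul_nonneg hpm.le hk) e₁.le,
    mul_nonneg (mul_nonneg hpm.le (by linarith : 0 ≤ -m - 2 * k)) e₂.le, mul_pos (mul_pos hpm hp) e₁]

end expDenom

lemma neg_mul_div_lt_deriv_const_div {f : ℝ → ℝ} {f' κ u t : ℝ} (hf : HasDerivAt f f' t)
    (hft : 0 < f t) (hu : 0 < u) (h : f' < κ * f t) :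
    -κ * (u / f t) < deriv (fun s => u / f s) t := by
  have hd : HasDerivAt (fun s => u / f s) (u * (-f' / f t ^ 2)) t := by
    simpa [div_eq_mul_inv] using (hf.inv hft.ne').const_mul u
  have hq : f' / f t < κ := (div_lt_iff₀ hft).2 h
  calc -κ * (u / f t) < -(f' / f t) * (u / f t) :=
        mul_lt_mul_of_pos_right (neg_lt_neg hq) (div_pos hu hft)
    _ = deriv (fun s => u / f s) t := by rw [hd.deriv]; field_simp

theorem stmt8_general (c c' r₁ μ u₀ : ℝ) (hc3 : (2 / 3) * c < c') (hc' : c' < c)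
    (hr : 0 < r₁) (hμ : 0 < μ) (hu : 0 < u₀)
    (lp lm : ℝ)
    (hlp : lp = (-(c' + 1 / r₁) + Real.sqrt ((c' + 1 / r₁) ^ 2 + 2 * μ)) / 2)
    (hlm : lm = (-(c' + 1 / r₁) - Real.sqrt ((c' + 1 / r₁) ^ 2 + 2 * μ)) / 2)
    (α : ℝ → ℝ)
    (hα : α = fun t => u₀ /
      (lp * Real.exp (lm * (c - c') * t) - lm * Real.exp (lp * (c - c') * t))) :
    (∀ t ≥ (0:ℝ), 0 < α t) ∧
    StrictAntiOn α (Set.Ici 0) ∧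
    Tendsto α atTop (𝓝 0) ∧
    (∀ t ≥ (0:ℝ), deriv α t > -(μ / 4) * α t) := by
  have hα : α = fun t => u₀ / expDenom lp lm (c - c') t := hα
  have hp : 0 < lp := hlp ▸ quadRoot_add_pos hμ
  have hm : lm < 0 := hlm ▸ quadRoot_sub_neg hμ
  have hpm : lp * lm = -(μ / 2) := hlp ▸ hlm ▸ quadRoot_add_mul_quadRoot_sub hμ.le
  have hk : 0 < c - c' := sub_pos.2 hc'
  have h2k : 2 * (c - c') ≤ -lm := by
    have := hlm ▸ lt_neg_quadRoot_sub (a := c' + 1 / r₁) hμ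
    have : 0 < 1 / r₁ := by positivity
    linarith
  subst hα
  refine ⟨fun t _ => div_pos hu (expDenom.pos hp hm t), fun s hs t ht hst => ?_,
    tendsto_const_nhds.div_atTop (expDenom.tendsto_atTop hp hm hk), fun t _ => ?_⟩
  · exact div_lt_div_of_pos_left hu (expDenom.pos hp hm s)
      (expDenom.strictMonoOn hp hm hk hs ht hst)
  · refine neg_mul_div_lt_deriv_const_div (expDenom.hasDerivAt t) (expDenom.pos hp hm t) hu ?_
    have key := expDenom.deriv_lt hp hm hk.le h2k t
    rw [hpm] at key ⊢
    linarith

theorem stmt8 (c c' r₁ μ u₀ : ℝ) (hc3 : (2 / 3) * c < c') (hc' : c' < c)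
    (hcpos : 0 < c) (hr : 0 < r₁) (hμ : 0 < μ) (hu : 0 < u₀)
    (lp lm : ℝ)
    (hlp : lp = (-(c' + 1 / r₁) + Real.sqrt ((c' + 1 / r₁) ^ 2 + 2 * μ)) / 2)
    (hlm : lm = (-(c' + 1 / r₁) - Real.sqrt ((c' + 1 / r₁) ^ 2 + 2 * μ)) / 2)
    (α : ℝ → ℝ)
    (hα : α = fun t => u₀ /
      (lp * Real.exp (lm * (c - c') * t) - lm * Real.exp (lp * (c - c') * t))) :
    (∀ t ≥ (0:ℝ), 0 < α t) ∧
    StrictAntiOn α (Set.Ici 0) ∧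
    Tendsto α atTop (𝓝 0) ∧
    (∀ t ≥ (0:ℝ), deriv α t > -(μ / 4) * α t) :=
  stmt8_general c c' r₁ μ u₀ hc3 hc' hr hμ hu lp lm hlp hlm α hα
end

section
/- Let N > 1. The function g₁(ζ) = (1+√(4ζN+1))/(2N) is strictly increasing in ζ > 0, the function g₂(ζ) = 1 - ζ·ln((2ζN+1+√(4ζN+1))/(2ζN)) is strictly decreasing in ζ > 0, g₁(0⁺) = 1/N < 1 = g₂(0⁺), and hence there exists a unique ζ_c > 0 with g₁(ζ_c) = g₂(ζ_c); moreover g₁(ζ) < g₂(ζ) if and only if ζ < ζ_c. -/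
/-!
Put `s = √(4ζN + 1)`, so that `ζ = (s² - 1) / (4N)` and the argument of the logarithm in `g₂`
is `(s + 1) / (s - 1)`. Then `g₂ = 1 - (s² - 1) log ((s + 1) / (s - 1)) / (4N)`, and
`(s² - 1) log ((s + 1) / (s - 1))` increases with `s > 1`: its derivative
`2s log ((s + 1) / (s - 1)) - 2` is positive because `log ((s + 1) / (s - 1)) > 2 / (s + 1) > 1 / s`.
Writing the same argument as `(s + 1)² / (4Nζ)` exhibits `g₂` near `0⁺` as a continuous function
of `ζ` and `ζ log ζ`, whence `g₂(0⁺) = 1`. Since `g₂ - g₁` is continuous and strictly decreasing,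
positive near `0⁺` and negative at `ζ = N - 1` (where `g₁ = 1 > g₂`), it has exactly one zero.
-/

open Filter Topology Set Real

theorem existsUnique_crossing_of_strictMonoOn_of_strictAntiOn {f g : ℝ → ℝ} {s : Set ℝ}
    (hs : s.OrdConnected) (hf : StrictMonoOn f s) (hg : StrictAntiOn g s)
    (hfc : ContinuousOn f s) (hgc : ContinuousOn g s) {a b : ℝ} (ha : a ∈ s) (hb : b ∈ s)
    (hfga : f a < g a) (hgfb : g b < f b) :
    ∃! c, c ∈ s ∧ f c = g c ∧ ∀ x ∈ s, (f x < g x ↔ x < c) := by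
  set F := g - f
  have hF : StrictAntiOn F s := fun x hx y hy hxy =>
    sub_lt_sub (hg hx hy hxy) (hf hx hy hxy)
  have hFa : 0 < F a := sub_pos.2 hfga
  have hFb : F b < 0 := sub_neg.2 hgfb
  have hab : a < b := (hF.lt_iff_gt hb ha).1 (hFb.trans hFa)
  obtain ⟨c, hc, hFc⟩ : ∃ c ∈ Icc a b, F c = 0 :=
    intermediate_value_Icc' hab.le ((hgc.sub hfc).mono (hs.out ha hb)) ⟨hFb.le, hFa.le⟩
  have hcs : c ∈ s := hs.out ha hb hc
  refine ⟨c, ⟨hcs, (sub_eq_zero.1 hFc).symm, fun x hx => ?_⟩, ?_⟩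
  · rw [← sub_pos]
    change 0 < F x ↔ x < c
    rw [← hF.lt_iff_gt hcs hx, hFc]
  · rintro c' ⟨hc's, hfgc', -⟩
    exact hF.injOn hc's hcs ((sub_eq_zero.2 hfgc'.symm).trans hFc.symm)

theorem Real.two_div_add_one_lt_log_sub_log {s : ℝ} (hs : 1 < s) :
    2 / (s + 1) < log (s + 1) - log (s - 1) := by
  have hs₁ : 0 < s - 1 := by linarith
  have hs₂ : 0 < s + 1 := by linarith
  have hlog := log_lt_sub_one_of_pos (div_pos hs₁ hs₂)
    (fun h => by rw [div_eq_one_iff_eq hs₂.ne'] at h; linarith)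
  rw [log_div hs₁.ne' hs₂.ne', div_sub_one hs₂.ne'] at hlog
  have : (s - 1 - (s + 1)) / (s + 1) = -(2 / (s + 1)) := by ring
  linarith

theorem Real.strictMonoOn_sq_sub_one_mul_log_sub_log :
    StrictMonoOn (fun s : ℝ => (s ^ 2 - 1) * (log (s + 1) - log (s - 1))) (Ioi 1) := by
  refine strictMonoOn_of_hasDerivWithinAt_pos (convex_Ioi 1)
    (f' := fun s => 2 * s * (log (s + 1) - log (s - 1)) - 2) ?_ (fun s hs => ?_) (fun s hs => ?_)
  · refine ContinuousOn.mul (by fun_prop) (ContinuousOn.sub ?_ ?_) <;>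
      exact continuousOn_log.comp (by fun_prop) fun s (hs : 1 < s) => by
        simp only [mem_compl_iff, mem_singleton_iff]; linarith
  all_goals rw [interior_Ioi, mem_Ioi] at hs
  · have hs₁ : s - 1 ≠ 0 := by linarith
    have hs₂ : s + 1 ≠ 0 := by linarith
    have hderiv := ((hasDerivAt_pow 2 s).sub_const 1).fun_mul
      ((((hasDerivAt_id' s).add_const 1).log hs₂).fun_sub
        (((hasDerivAt_id' s).sub_const 1).log hs₁))
    refine (hderiv.congr_deriv ?_).hasDerivWithinAt
    field_simp
    ring
  · have h := mul_lt_mul_of_pos_left (two_div_add_one_lt_log_sub_log hs) (by linarith : 0 < 2 * s)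
    have : 2 < 2 * s * (2 / (s + 1)) := by
      rw [show 2 * s * (2 / (s + 1)) = 4 * s / (s + 1) by ring, lt_div_iff₀ (by linarith)]
      linarith
    linarith

section Substitution

variable {N ζ s : ℝ}

theorem mul_log_eq_sq_sub_one_mul_div (hN : N ≠ 0) (hs₁ : 1 < s) (hs : s ^ 2 = 4 * ζ * N + 1) :
    ζ * log ((2 * ζ * N + 1 + s) / (2 * ζ * N)) =
      (s ^ 2 - 1) * (log (s + 1) - log (s - 1)) / (4 * N) := by
  have hζ : ζ = (s ^ 2 - 1) / (4 * N) := by field_simp; linarith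
  have harg : (2 * ζ * N + 1 + s) / (2 * ζ * N) = (s + 1) / (s - 1) := by
    rw [hζ, div_eq_div_iff (by field_simp; nlinarith) (by linarith)]
    field_simp
    ring
  rw [harg, log_div (by linarith) (by linarith), hζ]
  ring

theorem mul_log_eq_sub_mul_log_self (hN : 0 < N) (hζ : 0 < ζ) (hs₀ : 0 ≤ s)
    (hs : s ^ 2 = 4 * ζ * N + 1) :
    ζ * log ((2 * ζ * N + 1 + s) / (2 * ζ * N)) =
      ζ * (2 * log (s + 1) - log (4 * N)) - ζ * log ζ := by
  have harg : (2 * ζ * N + 1 + s) / (2 * ζ * N) = (s + 1) ^ 2 / (4 * N * ζ) := by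
    rw [div_eq_div_iff (by positivity) (by positivity)]
    linear_combination -2 * ζ * N * hs
  rw [harg, log_div (by positivity) (by positivity), log_pow, log_mul (by positivity) hζ.ne']
  push_cast
  ring

end Substitution

section Branches

variable {N : ℝ}

theorem strictMonoOn_one_add_sqrt_div (hN : 0 < N) :
    StrictMonoOn (fun ζ => (1 + √(4 * ζ * N + 1)) / (2 * N)) (Ioi 0) := by
  intro ζ₁ (hζ₁ : 0 < ζ₁) ζ₂ _ h
  have : √(4 * ζ₁ * N + 1) < √(4 * ζ₂ * N + 1) := sqrt_lt_sqrt (by positivity) (by gcongr)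
  exact div_lt_div_of_pos_right (by linarith) (by positivity)

theorem one_add_sqrt_div_eq_one (hN : 1 < N) :
    (1 + √(4 * (N - 1) * N + 1)) / (2 * N) = 1 := by
  rw [show 4 * (N - 1) * N + 1 = (2 * N - 1) ^ 2 by ring, sqrt_sq (by linarith)]
  field_simp
  ring

theorem one_sub_mul_log_lt_one (hN : 0 < N) {ζ : ℝ} (hζ : 0 < ζ) :
    1 - ζ * log ((2 * ζ * N + 1 + √(4 * ζ * N + 1)) / (2 * ζ * N)) < 1 := by
  refine sub_lt_self 1 (mul_pos hζ (log_pos ((one_lt_div (by positivity)).2 ?_)))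
  linarith [sqrt_nonneg (4 * ζ * N + 1)]

theorem strictAntiOn_one_sub_mul_log (hN : 0 < N) :
    StrictAntiOn (fun ζ => 1 - ζ * log ((2 * ζ * N + 1 + √(4 * ζ * N + 1)) / (2 * ζ * N)))
      (Ioi 0) := by
  have hs (ζ : ℝ) (hζ : 0 < ζ) : 1 < √(4 * ζ * N + 1) ∧ √(4 * ζ * N + 1) ^ 2 = 4 * ζ * N + 1 :=
    ⟨lt_sqrt_of_sq_lt (by nlinarith), sq_sqrt (by positivity)⟩
  intro ζ₁ (hζ₁ : 0 < ζ₁) ζ₂ (hζ₂ : 0 < ζ₂) h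
  obtain ⟨hs₁, hsq₁⟩ := hs ζ₁ hζ₁
  obtain ⟨hs₂, hsq₂⟩ := hs ζ₂ hζ₂
  simp only [mul_log_eq_sq_sub_one_mul_div hN.ne' hs₁ hsq₁, mul_log_eq_sq_sub_one_mul_div hN.ne' hs₂ hsq₂]
  gcongr 1 - ?_ / _
  exact strictMonoOn_sq_sub_one_mul_log_sub_log hs₁ hs₂ (by gcongr)

theorem exists_continuous_eqOn_one_sub_mul_log (hN : 0 < N) :
    ∃ G : ℝ → ℝ, Continuous G ∧ G 0 = 1 ∧
      EqOn (fun ζ => 1 - ζ * log ((2 * ζ * N + 1 + √(4 * ζ * N + 1)) / (2 * ζ * N))) G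
        (Ioi 0) := by
  refine ⟨fun ζ => 1 - (ζ * (2 * log (√(4 * ζ * N + 1) + 1) - log (4 * N)) - ζ * log ζ),
    ?_, by simp, fun ζ (hζ : 0 < ζ) => ?_⟩
  · have : Continuous fun ζ => log (√(4 * ζ * N + 1) + 1) :=
      Continuous.log (by fun_prop) fun ζ => by positivity
    fun_prop
  · simp only [mul_log_eq_sub_mul_log_self hN hζ (sqrt_nonneg _) (sq_sqrt (by positivity))]

end Branches

theorem stmt16 (N : ℝ) (hN : 1 < N)
    (g₁ g₂ : ℝ → ℝ)
    (hg₁ : g₁ = fun ζ => (1 + Real.sqrt (4 * ζ * N + 1)) / (2 * N))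
    (hg₂ : g₂ = fun ζ => 1 - ζ * Real.log
      ((2 * ζ * N + 1 + Real.sqrt (4 * ζ * N + 1)) / (2 * ζ * N))) :
    StrictMonoOn g₁ (Set.Ioi 0) ∧
    StrictAntiOn g₂ (Set.Ioi 0) ∧
    Tendsto g₁ (𝓝[>] (0:ℝ)) (𝓝 (1 / N)) ∧
    Tendsto g₂ (𝓝[>] (0:ℝ)) (𝓝 1) ∧
    1 / N < 1 ∧
    ∃! ζc : ℝ, 0 < ζc ∧ g₁ ζc = g₂ ζc ∧
      ∀ ζ > (0:ℝ), (g₁ ζ < g₂ ζ ↔ ζ < ζc) := by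
  have hN₀ : 0 < N := by linarith
  have hg₁c : Continuous g₁ := hg₁ ▸ by fun_prop
  obtain ⟨G, hGc, hG0, hg₂G⟩ := exists_continuous_eqOn_one_sub_mul_log hN₀
  rw [← hg₂] at hg₂G
  have hg₁0 : g₁ 0 = 1 / N := by
    simp only [hg₁, mul_zero, zero_mul, zero_add, sqrt_one]
    ring
  have hlim₁ : Tendsto g₁ (𝓝[>] 0) (𝓝 (1 / N)) :=
    hg₁0 ▸ (hg₁c.tendsto 0).mono_left nhdsWithin_le_nhds
  have hlim₂ : Tendsto g₂ (𝓝[>] 0) (𝓝 1) :=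
    hG0 ▸ ((hGc.tendsto 0).mono_left nhdsWithin_le_nhds).congr'
      (eventuallyEq_nhdsWithin_of_eqOn hg₂G).symm
  have hN₁ : 1 / N < 1 := (div_lt_one hN₀).2 hN
  have hmono : StrictMonoOn g₁ (Ioi 0) := hg₁ ▸ strictMonoOn_one_add_sqrt_div hN₀
  have hanti : StrictAntiOn g₂ (Ioi 0) := hg₂ ▸ strictAntiOn_one_sub_mul_log hN₀
  refine ⟨hmono, hanti, hlim₁, hlim₂, hN₁, ?_⟩
  obtain ⟨ζ₀, hζ₀, hζ₀_pos⟩ := ((hlim₁.eventually_lt hlim₂ hN₁).and self_mem_nhdsWithin).exists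
  have hcross : g₂ (N - 1) < g₁ (N - 1) := by
    simp only [hg₁, hg₂, one_add_sqrt_div_eq_one hN]
    exact one_sub_mul_log_lt_one hN₀ (by linarith)
  simpa only [mem_Ioi] using
    existsUnique_crossing_of_strictMonoOn_of_strictAntiOn ordConnected_Ioi hmono hanti hg₁c.continuousOn (hGc.continuousOn.congr hg₂G) hζ₀_pos
    (show N - 1 ∈ Ioi 0 by simpa using hN) hζ₀ hcross
end

section
/- Let b, K, μ_E, ν_E, ρ, μ_M, μ_F > 0 with ρ ∈ (0,1) and F* > 0. Define φ₀(F) = (1-ρ)ν_E bF/(μ_M(bF/K) + μ_M(μ_E+ν_E)) and φ(F) = (1/(2μ_M))·((1-ρ)ν_E bF/((bF/K)+μ_E+ν_E))·(1 - exp(2√(μ_M/μ_F)·ln(1 - F/F*))) for F ∈ (0,F*). Then φ is nondecreasing on (0,F*), φ(F) < φ₀(F) for all F ∈ (0,F*), and lim_{F→F*} φ(F) = (1/(2μ_M))·(1-ρ)ν_E bF*/((bF*/K)+μ_E+ν_E) = φ₀(F*)/2. -/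
open Filter Topology Set

theorem stmt18 (b K μE νE ρ μM μF Fstar : ℝ)
    (hb : 0 < b) (hK : 0 < K) (hμE : 0 < μE) (hνE : 0 < νE)
    (hρ : ρ ∈ Set.Ioo (0:ℝ) 1) (hμM : 0 < μM) (hμF : 0 < μF) (hFs : 0 < Fstar)
    (φ₀ φ : ℝ → ℝ)
    (hφ₀ : φ₀ = fun F => (1 - ρ) * νE * b * F / (μM * (b * F / K) + μM * (μE + νE)))
    (hφ : φ = fun F => (1 / (2 * μM)) *
      ((1 - ρ) * νE * b * F / ((b * F / K) + μE + νE)) *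
      (1 - Real.exp (2 * Real.sqrt (μM / μF) * Real.log (1 - F / Fstar)))) :
    MonotoneOn φ (Set.Ioo 0 Fstar) ∧
    (∀ F ∈ Set.Ioo (0:ℝ) Fstar, φ F < φ₀ F) ∧
    Tendsto φ (𝓝[<] Fstar)
      (𝓝 ((1 / (2 * μM)) * ((1 - ρ) * νE * b * Fstar / ((b * Fstar / K) + μE + νE)))) ∧
    (1 / (2 * μM)) * ((1 - ρ) * νE * b * Fstar / ((b * Fstar / K) + μE + νE)) =
      φ₀ Fstar / 2 := by
  obtain ⟨hρ0, hρ1⟩ := hρ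
  have h1ρ : 0 < 1 - ρ := by linarith
  set c : ℝ := 2 * Real.sqrt (μM / μF) with hc
  have hcpos : 0 < c := by
    have : 0 < Real.sqrt (μM / μF) := Real.sqrt_pos.mpr (by positivity)
    positivity
  have hden : ∀ F : ℝ, 0 ≤ F → 0 < b * F / K + μE + νE := fun F hF => by positivity
  refine ⟨?_, ?_, ?_, ?_⟩
  · -- Monotone
    intro x hx y hy hxy
    simp only [hφ]
    have hdx := hden x hx.1.le
    have hdy := hden y hy.1.le
    have hgxy : (1-ρ)*νE*b*x/((b*x/K)+μE+νE) ≤ (1-ρ)*νE*b*y/((b*y/K)+μE+νE) := by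
      rw [div_le_div_iff₀ hdx hdy]
      have hhint : 0 ≤ ((1-ρ)*νE*b*(μE+νE)) * (y - x) :=
        mul_nonneg (mul_nonneg (mul_nonneg (mul_nonneg h1ρ.le hνE.le) hb.le)
          (by linarith)) (by linarith)
      have key : (1-ρ)*νE*b*y*((b*x/K)+μE+νE) - (1-ρ)*νE*b*x*((b*y/K)+μE+νE)
          = ((1-ρ)*νE*b*(μE+νE)) * (y - x) := by ring
      linarith
    have hy1 : (0:ℝ) < 1 - y/Fstar := by
      have : y/Fstar < 1 := (div_lt_one hFs).mpr hy.2
      linarith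
    have hx1 : (0:ℝ) < 1 - x/Fstar := by
      have : x/Fstar < 1 := (div_lt_one hFs).mpr hx.2
      linarith
    have hxy' : 1 - y/Fstar ≤ 1 - x/Fstar := by
      have : x/Fstar ≤ y/Fstar := by gcongr
      linarith
    have hexp : Real.exp (c * Real.log (1 - y/Fstar)) ≤
        Real.exp (c * Real.log (1 - x/Fstar)) := by
      apply Real.exp_le_exp.mpr
      apply mul_le_mul_of_nonneg_left _ hcpos.le
      exact Real.log_le_log hy1 hxy'
    have hhxy : 1 - Real.exp (c * Real.log (1 - x/Fstar)) ≤
        1 - Real.exp (c * Real.log (1 - y/Fstar)) := by linarith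
    have hlogx : Real.log (1 - x/Fstar) ≤ 0 := Real.log_nonpos (by linarith) (by
      have : 0 ≤ x/Fstar := div_nonneg hx.1.le hFs.le
      linarith)
    have hhx0 : 0 ≤ 1 - Real.exp (c * Real.log (1 - x/Fstar)) := by
      have h1 : c * Real.log (1 - x/Fstar) ≤ 0 :=
        mul_nonpos_of_nonneg_of_nonpos hcpos.le hlogx
      have := Real.exp_le_one_iff.mpr h1
      linarith
    have hgy0 : 0 ≤ (1-ρ)*νE*b*y/((b*y/K)+μE+νE) :=
      div_nonneg (mul_nonneg (mul_nonneg (mul_nonneg h1ρ.le hνE.le) hb.le) hy.1.le) hdy.le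
    exact mul_le_mul (mul_le_mul_of_nonneg_left hgxy (by positivity)) hhxy hhx0
      (mul_nonneg (by positivity) hgy0)
  · -- strict inequality
    intro F hF
    simp only [hφ, hφ₀]
    have hd := hden F hF.1.le
    set g : ℝ := (1-ρ)*νE*b*F/((b*F/K)+μE+νE) with hg
    have hgpos : 0 < g := by
      rw [hg]
      exact div_pos (mul_pos (mul_pos (mul_pos h1ρ hνE) hb) hF.1) hd
    set e : ℝ := Real.exp (c * Real.log (1 - F/Fstar)) with he
    have hepos : 0 < e := Real.exp_pos _
    have hCpos : (0:ℝ) < 1/(2*μM) := by positivity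
    have heq : (1-ρ)*νE*b*F / (μM*(b*F/K)+μM*(μE+νE)) = (1/μM) * g := by
      rw [hg]
      field_simp
      ring
    rw [heq]
    have h2 : (1/(2*μM)) * g * (1 - e) < (1/(2*μM)) * g := by
      nlinarith [mul_pos (mul_pos hCpos hgpos) hepos]
    have h3 : (1/(2*μM)) * g < (1/μM) * g := by
      apply mul_lt_mul_of_pos_right _ hgpos
      rw [div_lt_div_iff₀ (by positivity) hμM]
      linarith
    linarith
  · -- limit
    have htend1 : Tendsto (fun F => 1 - F/Fstar) (𝓝[<] Fstar) (𝓝[>] (0:ℝ)) := by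
      apply tendsto_nhdsWithin_of_tendsto_nhds_of_eventually_within
      · have h : Tendsto (fun F : ℝ => 1 - F/Fstar) (𝓝 Fstar) (𝓝 (1 - Fstar/Fstar)) :=
          Tendsto.const_sub _ (tendsto_id.div_const _)
        rw [div_self hFs.ne'] at h
        simpa using h.mono_left nhdsWithin_le_nhds
      · filter_upwards [self_mem_nhdsWithin] with F hF
        have : F/Fstar < 1 := (div_lt_one hFs).mpr hF
        simp only [Set.mem_Ioi]
        linarith
    have htend2 : Tendsto (fun F => Real.exp (c * Real.log (1 - F/Fstar)))
        (𝓝[<] Fstar) (𝓝 0) := by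
      apply Real.tendsto_exp_atBot.comp
      apply Tendsto.const_mul_atBot hcpos
      exact Real.tendsto_log_nhdsGT_zero.comp htend1
    have hgt : Tendsto (fun F => (1-ρ)*νE*b*F/((b*F/K)+μE+νE)) (𝓝[<] Fstar)
        (𝓝 ((1-ρ)*νE*b*Fstar/((b*Fstar/K)+μE+νE))) := by
      have hcont : ContinuousAt (fun F : ℝ => (1-ρ)*νE*b*F/((b*F/K)+μE+νE)) Fstar :=
        ContinuousAt.div (by fun_prop) (by fun_prop) (hden Fstar hFs.le).ne'
      exact hcont.tendsto.mono_left nhdsWithin_le_nhds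
    have h : Tendsto φ (𝓝[<] Fstar)
        (𝓝 ((1/(2*μM)) * ((1-ρ)*νE*b*Fstar/((b*Fstar/K)+μE+νE)) * (1 - 0))) := by
      rw [hφ]
      exact (tendsto_const_nhds.mul hgt).mul (tendsto_const_nhds.sub htend2)
    simpa using h
  · -- equality
    rw [hφ₀]
    have h1 : (0:ℝ) < b * Fstar / K + μE + νE := hden Fstar hFs.le
    have h2 : μM * (b * Fstar / K) + μM * (μE + νE) ≠ 0 := by positivity
    have h3 : (2:ℝ) * μM ≠ 0 := by positivity
    field_simp
    ring
end
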